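/- Let f ∈ L²([0,1]^d) with ANOVA variance components σ_u². Then the dimension-weighted sum of variance components admits the representation ∑_{u ⊆ {1,…,d}} |u| σ_u² = ∑_{j=1}^d (1/2) ∫_{[0,1]^d} ∫_0^1 ( f(x) − f(x_{−j}:z_j) )² dz_j dx, where x_{−j}:z_j is x with its j-th coordinate replaced by z_j. Consequently, if σ² = ∑_{u ≠ ∅} σ_u² > 0, the mean dimension ν(f) = ∑_u |u| σ_u² / σ² equals ∑_{j=1}^d τ̄_j² / σ² with τ̄_j² = ∑_{u : j ∈ u} σ_u², and can be computed from (d+1)-dimensional expectations without constructing any ANOVA effect. -/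

import Mathlib

open MeasureTheory

/-- The uniform probability measure on the cube `[0,1]^d`. -/
noncomputable def cubeMeasure (d : ℕ) : Measure (Fin d → ℝ) :=
  Measure.pi fun _ => volume.restrict (Set.Icc (0 : ℝ) 1)

/-- The ANOVA (Sobol'–Hoeffding) effect `f_u` of `f : [0,1]^d → ℝ`, defined
recursively by `f_u(x) = ∫ f(x) dx_{−u} − ∑_{v ⊊ u} f_v(x)`: the integral of `f`
over the coordinates outside `u` (the coordinates in `u` being frozen at `x`),
minus the effects of all proper subsets.  In particular `f_∅ ≡ ∫ f`. -/
noncomputable def anova {d : ℕ} (f : (Fin d → ℝ) → ℝ) (u : Finset (Fin d))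
    (x : Fin d → ℝ) : ℝ :=
  (∫ y, f (fun i => if i ∈ u then x i else y i) ∂cubeMeasure d) -
    ∑ v ∈ u.ssubsets.attach, anova f v.1 x
termination_by u.card
decreasing_by
  exact Finset.card_lt_card (Finset.mem_ssubsets.mp v.2)

open MeasureTheory Finset

/-!
Write `P_s g (x) = ∫ g(x) dx_{-s}` for the average of `g` over the coordinates outside `s`
(`averageCompl`).  The effects satisfy `∑_{v ⊆ u} f_v = P_u f`, each `f_u` depends on `x_u` only,
and `P_{-j} f_u = 0` for `j ∈ u`: by induction on `u`, using the tower property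
`P_s P_t = P_{s ∩ t}`.  Since `P_s` is self-adjoint against functions of `x_s`, the effects are
orthogonal and `∫ (P_s f)² = ∑_{u ⊆ s} σ_u²`.  Expanding the square in Jansen's integral and
using self-adjointness once more gives `(1/2) ∫∫ (f(x) − f(x_{−j}:z_j))² = ∫ f² − ∫ (P_{-j} f)²`,
which is therefore `∑_{u ∋ j} σ_u² = τ̄_j²`.  Summing over `j` counts each `σ_u²` exactly `|u|`
times.
-/

theorem sum_card_mul_eq_sum_sum_filter_mem {α R : Type*} [Fintype α] [DecidableEq α]
    [NonAssocSemiring R] (c : Finset α → R) :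
    ∑ u : Finset α, (u.card : R) * c u = ∑ j : α, ∑ u ∈ univ.filter (j ∈ ·), c u := by
  simp only [sum_filter]
  rw [sum_comm]
  refine sum_congr rfl fun u _ => ?_
  rw [← sum_filter, filter_mem_eq_inter, univ_inter, sum_const, nsmul_eq_mul]

theorem filter_notMem_ssubsets {α : Type*} [DecidableEq α] {u : Finset α} {j : α} (hj : j ∈ u) :
    u.ssubsets.filter (j ∉ ·) = (u.erase j).powerset := by
  ext v
  simp only [mem_filter, mem_ssubsets, mem_powerset, subset_erase]
  constructor
  · rintro ⟨hv, hjv⟩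
    exact ⟨hv.subset, hjv⟩
  · rintro ⟨hv, hjv⟩
    exact ⟨ssubset_of_subset_of_ne hv (by rintro rfl; exact hjv hj), hjv⟩

theorem MeasureTheory.MeasurePreserving.integral_comp_of_aestronglyMeasurable {α β E : Type*}
    [MeasurableSpace α] [MeasurableSpace β] [NormedAddCommGroup E] [NormedSpace ℝ E]
    {μa : Measure α} {μb : Measure β} {e : α → β} (he : MeasurePreserving e μa μb) {g : β → E}
    (hg : AEStronglyMeasurable g μb) :
    ∫ a, g (e a) ∂μa = ∫ b, g b ∂μb := by
  rw [← he.map_eq] at hg ⊢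
  exact (integral_map he.measurable.aemeasurable hg).symm

section PiAverage

variable {ι : Type*} [Fintype ι] [DecidableEq ι] {X : ι → Type*} [∀ i, MeasurableSpace (X i)]

/-- `∫ g(x) dx_{-s}`, the conditional expectation of `g` given the coordinates in `s`. -/
noncomputable def averageCompl (μ : ∀ i, Measure (X i)) (s : Finset ι) (g : (∀ i, X i) → ℝ)
    (x : ∀ i, X i) : ℝ :=
  ∫ y, g (s.piecewise x y) ∂Measure.pi μ

variable {μ : ∀ i, Measure (X i)}

theorem dependsOn_averageCompl (s : Finset ι) (g : (∀ i, X i) → ℝ) :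
    DependsOn (averageCompl μ s g) s := by
  intro x x' hxx'
  refine integral_congr_ae (.of_forall fun y => congrArg g (funext fun i => ?_))
  by_cases hi : i ∈ s <;> simp [hi, hxx' i]

variable [∀ i, IsProbabilityMeasure (μ i)]

theorem measurePreserving_piecewise (s : Finset ι) :
    MeasurePreserving (fun p : (∀ i, X i) × (∀ i, X i) => s.piecewise p.1 p.2)
      ((Measure.pi μ).prod (Measure.pi μ)) (Measure.pi μ) := by
  have hmeas : Measurable fun p : (∀ i, X i) × (∀ i, X i) => s.piecewise p.1 p.2 :=
    measurable_pi_lambda _ fun i => by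
      by_cases hi : i ∈ s <;> simp only [Finset.piecewise, hi, if_true, if_false] <;> fun_prop
  refine ⟨hmeas, (Measure.pi_eq fun t ht => ?_).symm⟩
  have hpre : (fun p : (∀ i, X i) × (∀ i, X i) => s.piecewise p.1 p.2) ⁻¹' Set.univ.pi t =
      (Set.univ.pi fun i => if i ∈ s then t i else Set.univ) ×ˢ
        (Set.univ.pi fun i => if i ∈ s then Set.univ else t i) := by
    ext p
    simp only [Set.mem_preimage, Set.mem_pi, Set.mem_univ, true_implies, Set.mem_prod,
      ← forall_and]
    refine forall_congr' fun i => ?_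
    by_cases hi : i ∈ s <;> simp [hi]
  rw [Measure.map_apply hmeas (.univ_pi ht), hpre, Measure.prod_prod, Measure.pi_pi,
    Measure.pi_pi, ← prod_mul_distrib]
  exact prod_congr rfl fun i _ => by by_cases hi : i ∈ s <;> simp [hi]

theorem measurePreserving_update (j : ι) :
    MeasurePreserving (fun p : (∀ i, X i) × X j => Function.update p.1 j p.2)
      ((Measure.pi μ).prod (μ j)) (Measure.pi μ) := by
  have hφ : MeasurePreserving (fun p : (∀ i, X i) × (∀ i, X i) => (p.1, p.2 j))
      ((Measure.pi μ).prod (Measure.pi μ)) ((Measure.pi μ).prod (μ j)) :=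
    (MeasurePreserving.id _).prod (measurePreserving_eval μ j)
  have hcomp : (fun p : (∀ i, X i) × X j => Function.update p.1 j p.2) ∘
      (fun p : (∀ i, X i) × (∀ i, X i) => (p.1, p.2 j)) =
        fun p => (univ.erase j).piecewise p.1 p.2 := by
    ext p i
    by_cases hi : i = j
    · subst hi; simp
    · simp [hi, Finset.piecewise]
  refine ⟨measurable_update', ?_⟩
  rw [← hφ.map_eq, Measure.map_map measurable_update' hφ.measurable, hcomp]
  exact (measurePreserving_piecewise _).map_eq

theorem integrable_comp_piecewise_ae {g : (∀ i, X i) → ℝ} (hg : Integrable g (Measure.pi μ))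
    (s : Finset ι) :
    ∀ᵐ x ∂Measure.pi μ, Integrable (fun y => g (s.piecewise x y)) (Measure.pi μ) :=
  ((measurePreserving_piecewise s).integrable_comp_of_integrable hg).prod_right_ae

theorem aestronglyMeasurable_averageCompl {g : (∀ i, X i) → ℝ}
    (hg : AEStronglyMeasurable g (Measure.pi μ)) (s : Finset ι) :
    AEStronglyMeasurable (averageCompl μ s g) (Measure.pi μ) :=
  (hg.comp_measurePreserving (measurePreserving_piecewise s)).integral_prod_right'

theorem averageCompl_of_dependsOn {s : Finset ι} {g : (∀ i, X i) → ℝ} (hg : DependsOn g s) :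
    averageCompl μ s g = g := by
  ext x
  have : ∀ y, g (s.piecewise x y) = g x := fun y => hg fun i hi => s.piecewise_eq_of_mem _ _ hi
  simp [averageCompl, this]

theorem averageCompl_sub {s : Finset ι} {g h : (∀ i, X i) → ℝ} (hg : Integrable g (Measure.pi μ))
    (hh : Integrable h (Measure.pi μ)) :
    averageCompl μ s (g - h) =ᵐ[Measure.pi μ] averageCompl μ s g - averageCompl μ s h := by
  filter_upwards [integrable_comp_piecewise_ae hg s, integrable_comp_piecewise_ae hh s]
    with x hgx hhx
  exact integral_sub hgx hhx

theorem averageCompl_sum {s : Finset ι} {κ : Type*} {t : Finset κ} {g : κ → (∀ i, X i) → ℝ}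
    (hg : ∀ k ∈ t, Integrable (g k) (Measure.pi μ)) :
    averageCompl μ s (∑ k ∈ t, g k) =ᵐ[Measure.pi μ] ∑ k ∈ t, averageCompl μ s (g k) := by
  have : ∀ᵐ x ∂Measure.pi μ, ∀ k ∈ t, Integrable (fun y => g k (s.piecewise x y)) (Measure.pi μ) :=
    (ae_ball_iff t.countable_toSet).2 fun k hk => integrable_comp_piecewise_ae (hg k hk) s
  filter_upwards [this] with x hx
  simp only [averageCompl, Finset.sum_apply]
  exact integral_finsetSum _ hx

theorem memLp_averageCompl {g : (∀ i, X i) → ℝ} (hg : MemLp g 2 (Measure.pi μ)) (s : Finset ι) :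
    MemLp (averageCompl μ s g) 2 (Measure.pi μ) := by
  rw [memLp_two_iff_integrable_sq (aestronglyMeasurable_averageCompl hg.1 s)]
  -- `(P_s g x)²` is the integral of `g (s.piecewise x y) * g (s.piecewise x y')` over `(y, y')`.
  have hmp : ∀ k : (∀ i, X i) × (∀ i, X i) → ∀ i, X i,
      MeasurePreserving k ((Measure.pi μ).prod (Measure.pi μ)) (Measure.pi μ) →
      MemLp (fun q : (∀ i, X i) × ((∀ i, X i) × (∀ i, X i)) => g (s.piecewise q.1 (k q.2))) 2
        ((Measure.pi μ).prod ((Measure.pi μ).prod (Measure.pi μ))) := fun k hk =>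
    hg.comp_measurePreserving <|
      (measurePreserving_piecewise s).comp ((MeasurePreserving.id _).prod hk)
  have hint := ((hmp _ measurePreserving_fst).integrable_mul
    (hmp _ measurePreserving_snd)).integral_prod_left
  refine hint.congr (.of_forall fun x => ?_)
  simp only [averageCompl, sq]
  exact integral_prod_mul (fun y => g (s.piecewise x y)) (fun y => g (s.piecewise x y))

theorem integral_averageCompl_mul_of_dependsOn {s : Finset ι} {g h : (∀ i, X i) → ℝ}
    (hg : MemLp g 2 (Measure.pi μ)) (hh : MemLp h 2 (Measure.pi μ)) (hdep : DependsOn h s) :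
    ∫ x, averageCompl μ s g x * h x ∂Measure.pi μ = ∫ x, g x * h x ∂Measure.pi μ := by
  have hmix := measurePreserving_piecewise (μ := μ) s
  have hint : Integrable (fun p : (∀ i, X i) × (∀ i, X i) => g (s.piecewise p.1 p.2) * h p.1)
      ((Measure.pi μ).prod (Measure.pi μ)) :=
    (hg.comp_measurePreserving hmix).integrable_mul
      (hh.comp_measurePreserving measurePreserving_fst)
  calc ∫ x, averageCompl μ s g x * h x ∂Measure.pi μ
      = ∫ p, g (s.piecewise p.1 p.2) * h p.1 ∂(Measure.pi μ).prod (Measure.pi μ) := by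
        rw [integral_prod _ hint]
        simp only [averageCompl, integral_mul_const]
    _ = ∫ p, g (s.piecewise p.1 p.2) * h (s.piecewise p.1 p.2)
          ∂(Measure.pi μ).prod (Measure.pi μ) := by
        congr with p
        rw [hdep fun i hi => s.piecewise_eq_of_mem p.1 p.2 hi]
    _ = ∫ x, g x * h x ∂Measure.pi μ :=
        hmix.integral_comp_of_aestronglyMeasurable (hg.1.mul hh.1)

theorem averageCompl_averageCompl {g : (∀ i, X i) → ℝ} (hg : Integrable g (Measure.pi μ))
    (s t : Finset ι) :
    averageCompl μ s (averageCompl μ t g) =ᵐ[Measure.pi μ] averageCompl μ (s ∩ t) g := by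
  have hpiece : ∀ x y z : ∀ i, X i,
      t.piecewise (s.piecewise x y) z = (s ∩ t).piecewise x (t.piecewise y z) := by
    intro x y z
    ext i
    by_cases hs : i ∈ s <;> by_cases ht : i ∈ t <;> simp [hs, ht]
  have hmp : MeasurePreserving
      (fun q : (∀ i, X i) × (∀ i, X i) × (∀ i, X i) =>
        (s ∩ t).piecewise q.1 (t.piecewise q.2.1 q.2.2))
      ((Measure.pi μ).prod ((Measure.pi μ).prod (Measure.pi μ))) (Measure.pi μ) :=
    (measurePreserving_piecewise _).comp
      ((MeasurePreserving.id _).prod (measurePreserving_piecewise t))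
  filter_upwards [(hmp.integrable_comp_of_integrable hg).prod_right_ae,
    (hg.1.comp_measurePreserving (measurePreserving_piecewise (s ∩ t))).prodMk_left]
    with x hx hxm
  simp only [averageCompl, hpiece]
  rw [integral_integral hx]
  exact (measurePreserving_piecewise t).integral_comp_of_aestronglyMeasurable hxm

theorem integral_sq_sub_comp_piecewise {g : (∀ i, X i) → ℝ} (hg : MemLp g 2 (Measure.pi μ))
    (s : Finset ι) :
    ∫ p, (g p.1 - g (s.piecewise p.1 p.2)) ^ 2 ∂(Measure.pi μ).prod (Measure.pi μ) =
      2 * (∫ x, g x ^ 2 ∂Measure.pi μ - ∫ x, averageCompl μ s g x ^ 2 ∂Measure.pi μ) := by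
  have hfst : MemLp (fun p : (∀ i, X i) × (∀ i, X i) => g p.1) 2
      ((Measure.pi μ).prod (Measure.pi μ)) :=
    hg.comp_measurePreserving measurePreserving_fst
  have hmix : MemLp (fun p : (∀ i, X i) × (∀ i, X i) => g (s.piecewise p.1 p.2)) 2
      ((Measure.pi μ).prod (Measure.pi μ)) :=
    hg.comp_measurePreserving (measurePreserving_piecewise s)
  have hprod : Integrable (fun p : (∀ i, X i) × (∀ i, X i) => g p.1 * g (s.piecewise p.1 p.2))
      ((Measure.pi μ).prod (Measure.pi μ)) :=
    hfst.integrable_mul hmix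
  have hsum : Integrable
      (fun p : (∀ i, X i) × (∀ i, X i) => g p.1 ^ 2 + g (s.piecewise p.1 p.2) ^ 2)
      ((Measure.pi μ).prod (Measure.pi μ)) :=
    hfst.integrable_sq.add hmix.integrable_sq
  have hcross : ∫ p, g p.1 * g (s.piecewise p.1 p.2) ∂(Measure.pi μ).prod (Measure.pi μ) =
      ∫ x, averageCompl μ s g x ^ 2 ∂Measure.pi μ := by
    have hadj := integral_averageCompl_mul_of_dependsOn hg (memLp_averageCompl hg s)
      (dependsOn_averageCompl s g)
    rw [integral_prod _ hprod]
    simp only [sq, hadj]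
    simp only [averageCompl, integral_const_mul]
  calc ∫ p, (g p.1 - g (s.piecewise p.1 p.2)) ^ 2 ∂(Measure.pi μ).prod (Measure.pi μ)
      = ∫ p, (g p.1 ^ 2 + g (s.piecewise p.1 p.2) ^ 2 - 2 * (g p.1 * g (s.piecewise p.1 p.2)))
          ∂(Measure.pi μ).prod (Measure.pi μ) := by
        congr with p
        ring
    _ = 2 * (∫ x, g x ^ 2 ∂Measure.pi μ - ∫ x, averageCompl μ s g x ^ 2 ∂Measure.pi μ) := by
        rw [integral_sub hsum (hprod.const_mul 2), integral_add hfst.integrable_sq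
            hmix.integrable_sq, integral_const_mul, hcross,
          measurePreserving_fst.integral_comp_of_aestronglyMeasurable
            (g := fun x => g x ^ 2) (hg.1.pow 2),
          (measurePreserving_piecewise s).integral_comp_of_aestronglyMeasurable
            (g := fun x => g x ^ 2) (hg.1.pow 2)]
        ring

theorem integral_integral_sq_sub_update {g : (∀ i, X i) → ℝ} (hg : MemLp g 2 (Measure.pi μ))
    (j : ι) :
    ∫ x, ∫ z, (g x - g (Function.update x j z)) ^ 2 ∂μ j ∂Measure.pi μ =
      2 * (∫ x, g x ^ 2 ∂Measure.pi μ -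
        ∫ x, averageCompl μ (univ.erase j) g x ^ 2 ∂Measure.pi μ) := by
  have hF : MemLp (fun p : (∀ i, X i) × X j => g p.1 - g (Function.update p.1 j p.2)) 2
      ((Measure.pi μ).prod (μ j)) :=
    (hg.comp_measurePreserving measurePreserving_fst).sub
      (hg.comp_measurePreserving (measurePreserving_update j))
  have hφ : MeasurePreserving (fun p : (∀ i, X i) × (∀ i, X i) => (p.1, p.2 j))
      ((Measure.pi μ).prod (Measure.pi μ)) ((Measure.pi μ).prod (μ j)) :=
    (MeasurePreserving.id _).prod (measurePreserving_eval μ j)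
  rw [integral_integral hF.integrable_sq, ← integral_sq_sub_comp_piecewise hg]
  simp only [piecewise_erase_univ]
  exact (hφ.integral_comp_of_aestronglyMeasurable (hF.1.pow 2)).symm

end PiAverage

instance : IsProbabilityMeasure (volume.restrict (Set.Icc (0 : ℝ) 1)) :=
  ⟨by rw [Measure.restrict_apply_univ, Real.volume_Icc]; norm_num⟩

instance (d : ℕ) : IsProbabilityMeasure (cubeMeasure d) := by
  unfold cubeMeasure
  infer_instance

section ANOVA

variable {d : ℕ} {f : (Fin d → ℝ) → ℝ}

local notation "cubeAvg" => averageCompl fun _ : Fin _ => volume.restrict (Set.Icc (0 : ℝ) 1)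

theorem anova_eq_sub (f : (Fin d → ℝ) → ℝ) (u : Finset (Fin d)) :
    anova f u = cubeAvg u f - ∑ v ∈ u.ssubsets, anova f v := by
  ext x
  rw [anova, ← sum_attach u.ssubsets, Pi.sub_apply, Finset.sum_apply]
  rfl

theorem sum_powerset_anova (f : (Fin d → ℝ) → ℝ) (u : Finset (Fin d)) :
    ∑ v ∈ u.powerset, anova f v = cubeAvg u f := by
  rw [← sum_erase_add _ _ (mem_powerset_self u), anova_eq_sub f u]
  exact add_sub_cancel _ _

theorem dependsOn_anova (f : (Fin d → ℝ) → ℝ) (u : Finset (Fin d)) :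
    DependsOn (anova f u) u := by
  induction u using Finset.strongInduction with
  | H u ih =>
    intro x y hxy
    simp only [anova_eq_sub f u, Pi.sub_apply, Finset.sum_apply]
    rw [dependsOn_averageCompl u f hxy]
    congr 1
    refine sum_congr rfl fun v hv => ih v (mem_ssubsets.1 hv) fun i hi => hxy i ?_
    exact (mem_ssubsets.1 hv).subset hi

theorem memLp_anova (hf : MemLp f 2 (cubeMeasure d)) (u : Finset (Fin d)) :
    MemLp (anova f u) 2 (cubeMeasure d) := by
  induction u using Finset.strongInduction with
  | H u ih =>
    rw [anova_eq_sub]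
    exact (memLp_averageCompl hf u).sub (memLp_finsetSum' _ fun v hv => ih v (mem_ssubsets.1 hv))

theorem averageCompl_anova_eq_zero (hf : MemLp f 2 (cubeMeasure d)) {j : Fin d}
    {u : Finset (Fin d)} (hj : j ∈ u) :
    cubeAvg (univ.erase j) (anova f u) =ᵐ[cubeMeasure d] 0 := by
  induction u using Finset.strongInduction with
  | H u ih =>
    have hint : ∀ v, Integrable (anova f v) (cubeMeasure d) := fun v =>
      (memLp_anova hf v).integrable one_le_two
    have hIH : ∀ᵐ x ∂cubeMeasure d, ∀ v ∈ u.ssubsets, j ∈ v →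
        cubeAvg (univ.erase j) (anova f v) x = 0 := by
      refine (ae_ball_iff u.ssubsets.countable_toSet).2 fun v hv => ?_
      by_cases hjv : j ∈ v
      · filter_upwards [ih v (mem_ssubsets.1 hv) hjv] with x hx
        exact fun _ => hx
      · exact .of_forall fun x h => absurd h hjv
    -- `P_{-j} f_u = P_{u \ j} f - ∑_{v ⊊ u} P_{-j} f_v`, where the terms with `j ∈ v` vanish by
    -- induction and the others are `f_v` itself, so the sum is `∑_{v ⊆ u \ j} f_v = P_{u \ j} f`.
    rw [anova_eq_sub]
    filter_upwards [averageCompl_sub ((memLp_averageCompl hf u).integrable one_le_two)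
        (integrable_finsetSum' u.ssubsets fun v _ => hint v),
      averageCompl_sum (s := univ.erase j) fun v (_ : v ∈ u.ssubsets) => hint v,
      averageCompl_averageCompl (hf.integrable one_le_two) (univ.erase j) u, hIH]
      with x hsub hsum htower hzero
    have hsplit : ∑ v ∈ u.ssubsets, cubeAvg (univ.erase j) (anova f v) x =
        ∑ v ∈ (u.erase j).powerset, anova f v x := by
      rw [← sum_filter_add_sum_filter_not u.ssubsets (j ∈ ·),
        sum_eq_zero fun v hv => hzero v (mem_filter.1 hv).1 (mem_filter.1 hv).2, zero_add,
        filter_notMem_ssubsets hj]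
      refine sum_congr rfl fun v hv => ?_
      rw [averageCompl_of_dependsOn ((dependsOn_anova f v).mono (coe_subset.2
        (subset_erase.2 ⟨subset_univ v, (subset_erase.1 (mem_powerset.1 hv)).2⟩)))]
    rw [hsub, Pi.sub_apply, htower, hsum, Finset.sum_apply, hsplit, ← Finset.sum_apply,
      sum_powerset_anova, erase_inter, univ_inter]
    exact sub_self _

theorem integral_anova_mul_anova_of_mem_of_notMem (hf : MemLp f 2 (cubeMeasure d))
    {u v : Finset (Fin d)} {j : Fin d} (hju : j ∈ u) (hjv : j ∉ v) :
    ∫ x, anova f u x * anova f v x ∂cubeMeasure d = 0 := by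
  have hdep : DependsOn (anova f v) ↑(univ.erase j) :=
    (dependsOn_anova f v).mono (coe_subset.2 (subset_erase.2 ⟨subset_univ v, hjv⟩))
  have hadj : ∫ x, cubeAvg (univ.erase j) (anova f u) x * anova f v x ∂cubeMeasure d =
      ∫ x, anova f u x * anova f v x ∂cubeMeasure d :=
    integral_averageCompl_mul_of_dependsOn (memLp_anova hf u) (memLp_anova hf v) hdep
  rw [← hadj]
  refine integral_eq_zero_of_ae ?_
  filter_upwards [averageCompl_anova_eq_zero hf hju] with x hx
  rw [hx, Pi.zero_apply, zero_mul]

theorem integral_anova_mul_anova_of_ne (hf : MemLp f 2 (cubeMeasure d))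
    {u v : Finset (Fin d)} (huv : u ≠ v) :
    ∫ x, anova f u x * anova f v x ∂cubeMeasure d = 0 := by
  by_cases hsub : u ⊆ v
  · obtain ⟨j, hjv, hju⟩ := exists_of_ssubset (ssubset_of_subset_of_ne hsub huv)
    simpa only [mul_comm] using integral_anova_mul_anova_of_mem_of_notMem hf hjv hju
  · obtain ⟨j, hju, hjv⟩ := not_subset.1 hsub
    exact integral_anova_mul_anova_of_mem_of_notMem hf hju hjv

theorem integral_averageCompl_sq_eq_sum_anova (hf : MemLp f 2 (cubeMeasure d))
    (s : Finset (Fin d)) :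
    ∫ x, cubeAvg s f x ^ 2 ∂cubeMeasure d =
      ∑ u ∈ s.powerset, ∫ x, anova f u x ^ 2 ∂cubeMeasure d := by
  have hint : ∀ u v, Integrable (fun x => anova f u x * anova f v x) (cubeMeasure d) :=
    fun u v => (memLp_anova hf u).integrable_mul (memLp_anova hf v)
  simp only [← sum_powerset_anova f s, Finset.sum_apply, sq, sum_mul_sum]
  rw [integral_finsetSum _ fun u _ => integrable_finsetSum _ fun v _ => hint u v]
  refine sum_congr rfl fun u hu => ?_
  rw [integral_finsetSum _ fun v _ => hint u v,
    sum_eq_single u (fun v _ hvu => integral_anova_mul_anova_of_ne hf hvu.symm)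
      (fun hu' => absurd hu hu')]

theorem sum_integral_anova_sq_filter_mem (hf : MemLp f 2 (cubeMeasure d)) (j : Fin d) :
    ∑ u ∈ univ.filter (j ∈ ·), ∫ x, anova f u x ^ 2 ∂cubeMeasure d =
      1 / 2 * ∫ x, (∫ z in Set.Icc (0 : ℝ) 1, (f x - f (Function.update x j z)) ^ 2)
        ∂cubeMeasure d := by
  have hall : ∑ u, ∫ x, anova f u x ^ 2 ∂cubeMeasure d = ∫ x, f x ^ 2 ∂cubeMeasure d := by
    rw [← powerset_univ, ← integral_averageCompl_sq_eq_sum_anova hf,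
      averageCompl_of_dependsOn (s := univ) (by rw [coe_univ]; exact dependsOn_univ f)]
  have hnot : ∑ u ∈ univ.filter (j ∉ ·), ∫ x, anova f u x ^ 2 ∂cubeMeasure d =
      ∫ x, cubeAvg (univ.erase j) f x ^ 2 ∂cubeMeasure d := by
    rw [integral_averageCompl_sq_eq_sum_anova hf]
    congr 1
    ext v
    simp [subset_erase]
  have hjansen : ∫ x, (∫ z in Set.Icc (0 : ℝ) 1, (f x - f (Function.update x j z)) ^ 2)
      ∂cubeMeasure d = 2 * (∫ x, f x ^ 2 ∂cubeMeasure d -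
        ∫ x, cubeAvg (univ.erase j) f x ^ 2 ∂cubeMeasure d) :=
    integral_integral_sq_sub_update hf j
  rw [hjansen, ← hall, ← hnot, ← sum_filter_add_sum_filter_not univ (j ∈ ·)]
  ring

end ANOVA

/-- the dimension-weighted sum of ANOVA variance components equals
the sum over coordinates of Jansen's expression, `∑_u |u| σ_u² = ∑_j (1/2)∫∫
(f(x) − f(x_{−j}:z_j))² dz_j dx`; consequently, if `σ² = ∑_{u ≠ ∅} σ_u² > 0`, the
mean dimension `ν(f) = ∑_u |u| σ_u² / σ²` equals `∑_j τ̄_j² / σ²` with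
`τ̄_j² = ∑_{u : j ∈ u} σ_u²`. -/
theorem stmt_5 {d : ℕ} (f : (Fin d → ℝ) → ℝ) (hf : MemLp f 2 (cubeMeasure d)) :
    (∑ u : Finset (Fin d), (u.card : ℝ) * ∫ x, (anova f u x) ^ 2 ∂cubeMeasure d
        = ∑ j : Fin d, (1 / 2) *
            ∫ x, (∫ z in Set.Icc (0 : ℝ) 1, (f x - f (Function.update x j z)) ^ 2)
              ∂cubeMeasure d) ∧
      (0 < ∑ u ∈ Finset.univ.erase (∅ : Finset (Fin d)),
            ∫ x, (anova f u x) ^ 2 ∂cubeMeasure d →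
        (∑ u : Finset (Fin d), (u.card : ℝ) * ∫ x, (anova f u x) ^ 2 ∂cubeMeasure d) /
            (∑ u ∈ Finset.univ.erase (∅ : Finset (Fin d)),
              ∫ x, (anova f u x) ^ 2 ∂cubeMeasure d)
          = (∑ j : Fin d, ∑ u ∈ Finset.univ.filter (fun u : Finset (Fin d) => j ∈ u),
                ∫ x, (anova f u x) ^ 2 ∂cubeMeasure d) /
              (∑ u ∈ Finset.univ.erase (∅ : Finset (Fin d)),
                ∫ x, (anova f u x) ^ 2 ∂cubeMeasure d)) := by
  rw [sum_card_mul_eq_sum_sum_filter_mem]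
  exact ⟨sum_congr rfl fun j _ => sum_integral_anova_sq_filter_mem hf j, fun _ => rfl⟩
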